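/- arXiv:2009.03783 — 2 statements merged into one kernel-verified Lean document; each statement's English description precedes it below -/
import Mathlib

section
/- Let N ≥ 1 and Q ≥ 1 be integers. Let 𝒱 be a finite nonempty family of value functions v : Finset (Fin N) → ℝ whose robust core C₀ = ⋂_{v∈𝒱} C(v) is nonempty. Let ℳ be a finite family of maps M : X → X, each a paracontraction with respect to ‖·‖_{2,2}, such that ⋂_{M∈ℳ} fix(M) = C₀^N := {x ∈ X | ∀ i, x_i ∈ C₀}. Let 𝒲 be a finite family of N×N doubly stochastic matrices with strictly positive diagonal entries. Let (M^k)_{k∈ℕ} be a sequence with M^k ∈ ℳ such that for every n ∈ ℕ, {M^n, M^{n+1}, …, M^{n+Q}} = ℳ, and let (W^k)_{k∈ℕ} be a sequence with W^k ∈ 𝒲 such that for every k ∈ ℕ the edge set ⋃_{l=1}^{Q} {(i,j) | W^{k+l}_{ij} > 0} is strongly connected on Fin N. Then for every initial point x⁰ ∈ X, the sequence generated by the bargaining iteration x^{k+1} = M^k(𝑾^k x^k) converges to some x̄ ∈ 𝒜 ∩ C₀^N, i.e., a point with all components equal to a common payoff vector lying in the robust core C₀. -/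
/-!
Fix a consensus point `y` with components in `C₀`; it is fixed by every `M ∈ ℳ` and every `𝑾`.
By Jensen's inequality for the strictly convex `‖·‖²`, row by row, `𝑾` does not increase the
distance to `y`, with equality only if `x` is constant along the edges of `W` (so `𝑾 x = x`);
the paracontraction `M` then decreases it strictly unless `M x = x`. Hence `‖x k - y‖` decreases
to a limit `δ`, the iterates have a cluster point `z`, and every subsequential limit lies at
distance `δ` from `y`. As only finitely many maps occur, a map used infinitely often along a
subsequence converging to `z` fixes `z` (its image of `z` is again such a limit), and the shifted
subsequences still converge to `z`; so at some time `k` all of the next `Q` maps fix `z`. The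
covering condition on `M` puts `z` in `C₀ᴺ`, the connectivity of the edges of
`W (k + 1), …, W (k + Q)` makes it a consensus, and then `‖x k - z‖` decreases as well, to `0`
along the subsequence.
-/

open scoped BigOperators

noncomputable section

/-- The stacked space `X = Fin N → EuclideanSpace ℝ (Fin N)` with the ℓ²-product norm. -/
abbrev XSp (N : ℕ) := PiLp 2 (fun _ : Fin N => EuclideanSpace ℝ (Fin N))

/-- The core of a TU coalitional game with value function `v`. -/
def core {N : ℕ} (v : Finset (Fin N) → ℝ) : Set (EuclideanSpace ℝ (Fin N)) :=
  {x | ∑ i, x i = v Finset.univ ∧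
    ∀ S : Finset (Fin N), S.Nonempty → ∑ i ∈ S, x i ≥ v S}

/-- A matrix is doubly stochastic: nonnegative entries, rows and columns sum to 1. -/
def DoublyStochastic {N : ℕ} (W : Matrix (Fin N) (Fin N) ℝ) : Prop :=
  (∀ i j, 0 ≤ W i j) ∧ (∀ i, ∑ j, W i j = 1) ∧ (∀ j, ∑ i, W i j = 1)

/-- The averaging map `(𝑾 x)_i = ∑ j, W i j • x j` (Kronecker product `W ⊗ I`). -/
def avgMap {N n : ℕ} (W : Matrix (Fin N) (Fin N) ℝ)
    (x : PiLp 2 fun _ : Fin N => EuclideanSpace ℝ (Fin n)) :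
    PiLp 2 fun _ : Fin N => EuclideanSpace ℝ (Fin n) :=
  WithLp.toLp 2 fun i => ∑ j, W i j • x j

/-- An edge set on `Fin N` is strongly connected. -/
def StronglyConnected {N : ℕ} (E : Set (Fin N × Fin N)) : Prop :=
  ∀ i j : Fin N, Relation.ReflTransGen (fun a b => (a, b) ∈ E) i j

/-- A map is nonexpansive (1-Lipschitz). -/
def Nonexpansive {E : Type*} [NormedAddCommGroup E] (T : E → E) : Prop :=
  ∀ x y, ‖T x - T y‖ ≤ ‖x - y‖

/-- A continuous map `M` is a paracontraction if `‖M x - y‖ < ‖x - y‖` whenever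
`x` is not a fixed point of `M` and `y` is a fixed point of `M`. -/
def Paracontraction {E : Type*} [NormedAddCommGroup E] (M : E → E) : Prop :=
  Continuous M ∧ ∀ x y, M x ≠ x → M y = y → ‖M x - y‖ < ‖x - y‖

open Filter Topology

theorem strictConvexOn_norm_sq {E : Type*} [NormedAddCommGroup E] [InnerProductSpace ℝ E] :
    StrictConvexOn ℝ Set.univ fun v : E => ‖v‖ ^ 2 := by
  refine ⟨convex_univ, fun u _ v _ huv a b ha hb hab => ?_⟩
  have hid : ‖a • u + b • v‖ ^ 2 = a * ‖u‖ ^ 2 + b * ‖v‖ ^ 2 - a * b * ‖u - v‖ ^ 2 := by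
    rw [norm_add_sq_real, norm_sub_sq_real, norm_smul, norm_smul, real_inner_smul_left,
      real_inner_smul_right, Real.norm_of_nonneg ha.le, Real.norm_of_nonneg hb.le]
    obtain rfl : b = 1 - a := by linarith
    ring
  have hpos : 0 < a * b * ‖u - v‖ ^ 2 := by
    have := sub_ne_zero.2 huv
    positivity
  simp only [smul_eq_mul]
  linarith

theorem norm_sum_smul_sq_le {E ι : Type*} [NormedAddCommGroup E] [InnerProductSpace ℝ E]
    [Fintype ι] {w : ι → ℝ} (hw₀ : ∀ j, 0 ≤ w j) (hw₁ : ∑ j, w j = 1) (u : ι → E) :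
    ‖∑ j, w j • u j‖ ^ 2 ≤ ∑ j, w j * ‖u j‖ ^ 2 :=
  strictConvexOn_norm_sq.convexOn.map_sum_le (fun j _ => hw₀ j) hw₁ fun _ _ => Set.mem_univ _

section AvgMap

variable {N n : ℕ} {W : Matrix (Fin N) (Fin N) ℝ}

@[simp] theorem avgMap_apply (x : PiLp 2 fun _ : Fin N => EuclideanSpace ℝ (Fin n)) (i : Fin N) :
    avgMap W x i = ∑ j, W i j • x j := rfl

theorem continuous_avgMap : Continuous (avgMap (n := n) W) := by
  unfold avgMap
  fun_prop

end AvgMap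

namespace DoublyStochastic

variable {N n : ℕ} {W : Matrix (Fin N) (Fin N) ℝ}
  {x y : PiLp 2 fun _ : Fin N => EuclideanSpace ℝ (Fin n)}

theorem avgMap_eq_self (hW : DoublyStochastic W) (hx : ∀ i j, 0 < W i j → x j = x i) :
    avgMap W x = x := by
  ext1 i
  have hterm : ∀ j, W i j • x j = W i j • x i := fun j => by
    rcases (hW.1 i j).lt_or_eq with hpos | hzero
    · rw [hx i j hpos]
    · rw [← hzero, zero_smul, zero_smul]
  simp_rw [avgMap_apply, hterm, ← Finset.sum_smul, hW.2.1 i, one_smul]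

theorem norm_avgMap_sub_sq (hW : DoublyStochastic W) (hy : ∀ i j, y i = y j) :
    ‖avgMap W x - y‖ ^ 2 = ∑ i, ‖∑ j, W i j • (x j - y j)‖ ^ 2 := by
  rw [PiLp.norm_sq_eq_of_L2]
  refine Finset.sum_congr rfl fun i _ => ?_
  have hyi : y i = ∑ j, W i j • y j := by
    simp_rw [hy _ i, ← Finset.sum_smul, hW.2.1 i, one_smul]
  simp [hyi, smul_sub]

theorem sum_sum_mul_norm_sub_sq (hW : DoublyStochastic W) :
    ∑ i, ∑ j, W i j * ‖x j - y j‖ ^ 2 = ‖x - y‖ ^ 2 := by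
  rw [Finset.sum_comm, PiLp.norm_sq_eq_of_L2]
  simp_rw [← Finset.sum_mul, hW.2.2, one_mul, PiLp.sub_apply]

/-- Jensen's inequality in every row gives `‖𝑾 x - y‖ ≤ ‖x - y‖`; equality is its equality case in
every row. -/
theorem eq_of_pos_of_norm_sub_le_norm_avgMap_sub (hW : DoublyStochastic W) (hdiag : ∀ i, 0 < W i i)
    (hy : ∀ i j, y i = y j) (h : ‖x - y‖ ≤ ‖avgMap W x - y‖) :
    ∀ i j, 0 < W i j → x j = x i := by
  have hle : ∀ i, ‖∑ j, W i j • (x j - y j)‖ ^ 2 ≤ ∑ j, W i j * ‖x j - y j‖ ^ 2 :=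
    fun i => norm_sum_smul_sq_le (hW.1 i) (hW.2.1 i) fun j => x j - y j
  have hrows : ∀ i, ‖∑ j, W i j • (x j - y j)‖ ^ 2 = ∑ j, W i j * ‖x j - y j‖ ^ 2 := by
    have hsum := le_antisymm (Finset.sum_le_sum fun i _ => hle i) <| by
      rw [← hW.norm_avgMap_sub_sq hy, hW.sum_sum_mul_norm_sub_sq]
      exact pow_le_pow_left₀ (norm_nonneg _) h 2
    exact fun i => (Finset.sum_eq_sum_iff_of_le fun i _ => hle i).1 hsum i (Finset.mem_univ i)
  intro i j hij
  have hjensen := (strictConvexOn_norm_sq.map_sum_eq_iff_of_nonneg (fun j _ => hW.1 i j)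
    (hW.2.1 i) fun j _ => Set.mem_univ (x j - y j)).1 (by simpa using hrows i)
  simpa [hy j i] using hjensen (Finset.mem_univ j) hij.ne' (Finset.mem_univ i) (hdiag i).ne'

end DoublyStochastic

theorem Paracontraction.norm_sub_le {E : Type*} [NormedAddCommGroup E] {M : E → E}
    (hM : Paracontraction M) {y : E} (hy : M y = y) (x : E) : ‖M x - y‖ ≤ ‖x - y‖ := by
  by_cases hx : M x = x
  · rw [hx]
  · exact (hM.2 x y hx hy).le

theorem Paracontraction.eq_of_norm_sub_le {E : Type*} [NormedAddCommGroup E] {M : E → E}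
    (hM : Paracontraction M) {x y : E} (hy : M y = y) (h : ‖x - y‖ ≤ ‖M x - y‖) : M x = x := by
  by_contra hx
  exact (hM.2 x y hx hy).not_ge h

theorem Filter.map_add_le_atTop {ℱ : Filter ℕ} (hℱ : ℱ ≤ atTop) (l : ℕ) :
    map (· + l) ℱ ≤ atTop :=
  (map_mono hℱ).trans (tendsto_add_atTop_nat l)

section FejerMonotone

variable {α : Type*} [PseudoMetricSpace α] {x : ℕ → α} {y z : α} {ℱ : Filter ℕ}

theorem dist_eq_iInf_of_antitone_of_tendsto (hmono : Antitone fun k => dist (x k) y)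
    (hℱ : ℱ ≤ atTop) [ℱ.NeBot] (hlim : Tendsto x ℱ (𝓝 z)) :
    dist z y = ⨅ k, dist (x k) y :=
  tendsto_nhds_unique (hlim.dist tendsto_const_nhds)
    ((tendsto_atTop_ciInf hmono ⟨0, Set.forall_mem_range.2 fun _ => dist_nonneg⟩).mono_left hℱ)

theorem tendsto_of_antitone_dist_of_tendsto (hmono : Antitone fun k => dist (x k) z)
    (hℱ : ℱ ≤ atTop) [ℱ.NeBot] (hlim : Tendsto x ℱ (𝓝 z)) : Tendsto x atTop (𝓝 z) := by
  have hinf : (⨅ k, dist (x k) z) = 0 :=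
    (dist_eq_iInf_of_antitone_of_tendsto hmono hℱ hlim).symm.trans (dist_self z)
  rw [tendsto_iff_dist_tendsto_zero, ← hinf]
  exact tendsto_atTop_ciInf hmono ⟨0, Set.forall_mem_range.2 fun _ => dist_nonneg⟩

end FejerMonotone

structure FiniteParacontractiveFamily {α : Type*} [PseudoMetricSpace α] (T : ℕ → α → α) (y : α) :
    Prop where
  finite_range : (Set.range T).Finite
  continuous : ∀ k, Continuous (T k)
  dist_lt : ∀ k w, T k w ≠ w → dist (T k w) y < dist w y

namespace FiniteParacontractiveFamily

variable {α : Type*} [PseudoMetricSpace α] {T : ℕ → α → α} {x : ℕ → α} {y z : α}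
  {ℱ : Filter ℕ}

theorem dist_apply_le (hT : FiniteParacontractiveFamily T y) (k : ℕ) (w : α) :
    dist (T k w) y ≤ dist w y := by
  by_cases hw : T k w = w
  · rw [hw]
  · exact (hT.dist_lt k w hw).le

theorem antitone_dist (hT : FiniteParacontractiveFamily T y) (hx : ∀ k, x (k + 1) = T k (x k)) :
    Antitone fun k => dist (x k) y :=
  antitone_nat_of_succ_le fun k => hx k ▸ hT.dist_apply_le k (x k)

theorem apply_eq_self_of_frequently (hT : FiniteParacontractiveFamily T y)
    (hx : ∀ k, x (k + 1) = T k (x k)) (hℱ : ℱ ≤ atTop) (hlim : Tendsto x ℱ (𝓝 z)) (m : ℕ)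
    (hfreq : ∃ᶠ k in ℱ, T k = T m) : T m z = z := by
  set ℱm := ℱ ⊓ 𝓟 {k | T k = T m}
  have : ℱm.NeBot := frequently_iff_neBot.1 hfreq
  have hℱm : ℱm ≤ atTop := inf_le_left.trans hℱ
  have hlimm : Tendsto x ℱm (𝓝 z) := hlim.mono_left inf_le_left
  have hnext : Tendsto x (map (· + 1) ℱm) (𝓝 (T m z)) := by
    rw [tendsto_map'_iff]
    refine (((hT.continuous m).tendsto z).comp hlimm).congr' ?_
    filter_upwards [mem_inf_of_right (mem_principal_self _)] with k (hk : T k = T m)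
    simp [hx k, hk]
  have hmono := hT.antitone_dist hx
  have hdist_z := dist_eq_iInf_of_antitone_of_tendsto hmono hℱm hlimm
  have hdist_Tz := dist_eq_iInf_of_antitone_of_tendsto hmono (map_add_le_atTop hℱm 1) hnext
  by_contra hne
  exact (hT.dist_lt m z hne).ne (hdist_Tz.trans hdist_z.symm)

theorem eventually_apply_eq_self (hT : FiniteParacontractiveFamily T y)
    (hx : ∀ k, x (k + 1) = T k (x k)) (hℱ : ℱ ≤ atTop) (hlim : Tendsto x ℱ (𝓝 z)) :
    ∀ᶠ k in ℱ, T k z = z := by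
  have hfix : ∀ S ∈ Set.range T, ∀ᶠ k in ℱ, T k = S → S z = z := by
    rintro _ ⟨m, rfl⟩
    exact eventually_imp_distrib_right.2 (hT.apply_eq_self_of_frequently hx hℱ hlim m)
  filter_upwards [(eventually_all_finite hT.finite_range).2 hfix] with k hk
  exact hk (T k) ⟨k, rfl⟩ rfl

theorem tendsto_map_add_one (hT : FiniteParacontractiveFamily T y)
    (hx : ∀ k, x (k + 1) = T k (x k)) (hℱ : ℱ ≤ atTop) (hlim : Tendsto x ℱ (𝓝 z)) :
    Tendsto x (map (· + 1) ℱ) (𝓝 z) := by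
  rw [tendsto_map'_iff, tendsto_iff_forall_eventually_mem]
  intro U hU
  have hnear : ∀ S ∈ Set.range T, ∀ᶠ k in ℱ, S z = z → S (x k) ∈ U := by
    rintro _ ⟨m, rfl⟩
    refine eventually_imp_distrib_left.2 fun hm => ?_
    exact (((hT.continuous m).tendsto' z z hm).comp hlim).eventually_mem hU
  filter_upwards [hT.eventually_apply_eq_self hx hℱ hlim,
    (eventually_all_finite hT.finite_range).2 hnear] with k hkz hk
  simpa [hx k] using hk (T k) ⟨k, rfl⟩ hkz

theorem tendsto_map_add (hT : FiniteParacontractiveFamily T y)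
    (hx : ∀ k, x (k + 1) = T k (x k)) (hℱ : ℱ ≤ atTop) (hlim : Tendsto x ℱ (𝓝 z)) (l : ℕ) :
    Tendsto x (map (· + l) ℱ) (𝓝 z) := by
  induction l with
  | zero => simpa using hlim
  | succ l ih =>
    simpa [map_map, Function.comp_def, add_assoc] using
      hT.tendsto_map_add_one hx (map_add_le_atTop hℱ l) ih

theorem eventually_forall_le_apply_eq_self (hT : FiniteParacontractiveFamily T y)
    (hx : ∀ k, x (k + 1) = T k (x k)) (hℱ : ℱ ≤ atTop) (hlim : Tendsto x ℱ (𝓝 z)) (L : ℕ) :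
    ∀ᶠ k in ℱ, ∀ l ≤ L, T (k + l) z = z := by
  refine (eventually_all_finite (Set.finite_Iic L)).2 fun l _ => ?_
  exact eventually_map.1 <|
    hT.eventually_apply_eq_self hx (map_add_le_atTop hℱ l) (hT.tendsto_map_add hx hℱ hlim l)

end FiniteParacontractiveFamily

section Bargaining

variable {N n : ℕ} {M : (PiLp 2 fun _ : Fin N => EuclideanSpace ℝ (Fin n)) →
    PiLp 2 fun _ : Fin N => EuclideanSpace ℝ (Fin n)} {W : Matrix (Fin N) (Fin N) ℝ}
  {w y : PiLp 2 fun _ : Fin N => EuclideanSpace ℝ (Fin n)}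

theorem Paracontraction.eq_of_norm_sub_le_comp_avgMap (hM : Paracontraction M) (hMy : M y = y)
    (hW : DoublyStochastic W) (hdiag : ∀ i, 0 < W i i) (hy : ∀ i j, y i = y j)
    (h : ‖w - y‖ ≤ ‖M (avgMap W w) - y‖) : M w = w ∧ ∀ i j, 0 < W i j → w j = w i := by
  have hedge :=
    hW.eq_of_pos_of_norm_sub_le_norm_avgMap_sub hdiag hy (h.trans (hM.norm_sub_le hMy _))
  rw [hW.avgMap_eq_self hedge] at h
  exact ⟨hM.eq_of_norm_sub_le hMy h, hedge⟩

theorem finiteParacontractiveFamily_comp_avgMap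
    {M : ℕ → (PiLp 2 fun _ : Fin N => EuclideanSpace ℝ (Fin n)) →
      PiLp 2 fun _ : Fin N => EuclideanSpace ℝ (Fin n)}
    {W : ℕ → Matrix (Fin N) (Fin N) ℝ}
    (hMfin : (Set.range M).Finite) (hWfin : (Set.range W).Finite)
    (hM : ∀ k, Paracontraction (M k)) (hW : ∀ k, DoublyStochastic (W k) ∧ ∀ i, 0 < W k i i)
    (hy : ∀ i j, y i = y j) (hMy : ∀ k, M k y = y) :
    FiniteParacontractiveFamily (fun k => M k ∘ avgMap (W k)) y where
  finite_range := (hMfin.image2 (fun U V => U ∘ avgMap V) hWfin).subset <|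
    Set.range_subset_iff.2 fun k => Set.mem_image2_of_mem ⟨k, rfl⟩ ⟨k, rfl⟩
  continuous k := (hM k).1.comp continuous_avgMap
  dist_lt k w hw := by
    rw [dist_eq_norm, dist_eq_norm]
    by_contra hge
    obtain ⟨hMw, hedge⟩ := (hM k).eq_of_norm_sub_le_comp_avgMap (hMy k) (hW k).1 (hW k).2 hy
      (not_lt.1 hge)
    exact hw (by simp [(hW k).1.avgMap_eq_self hedge, hMw])

end Bargaining

theorem StronglyConnected.eq_of_forall_mem {N : ℕ} {E : Set (Fin N × Fin N)}
    (hE : StronglyConnected E) {β : Type*} {f : Fin N → β} (hf : ∀ a b, (a, b) ∈ E → f b = f a)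
    (i j : Fin N) : f i = f j := by
  induction hE i j with
  | refl => rfl
  | tail _ hab ih => exact ih.trans (hf _ _ hab).symm

theorem bargaining_convergence_general
    (N Q : ℕ)
    (C₀ : Set (EuclideanSpace ℝ (Fin N)))
    (hC₀ne : C₀.Nonempty)
    (ℳ : Set (XSp N → XSp N)) (hℳfin : ℳ.Finite)
    (hℳpara : ∀ M ∈ ℳ, Paracontraction M)
    (hℳfix : (⋂ M ∈ ℳ, Function.fixedPoints M) = {x : XSp N | ∀ i, x i ∈ C₀})
    (𝒲 : Set (Matrix (Fin N) (Fin N) ℝ)) (h𝒲fin : 𝒲.Finite)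
    (h𝒲 : ∀ W ∈ 𝒲, DoublyStochastic W ∧ ∀ i, 0 < W i i)
    (M : ℕ → (XSp N → XSp N)) (hM : ∀ k, M k ∈ ℳ)
    (hMQ : ∀ n : ℕ, {U | ∃ l ≤ Q, M (n + l) = U} = ℳ)
    (W : ℕ → Matrix (Fin N) (Fin N) ℝ) (hW : ∀ k, W k ∈ 𝒲)
    (hWconn : ∀ k : ℕ, StronglyConnected
      {p : Fin N × Fin N | ∃ l, 1 ≤ l ∧ l ≤ Q ∧ 0 < W (k + l) p.1 p.2})
    (x : ℕ → XSp N)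
    (hiter : ∀ k, x (k + 1) = M k (avgMap (W k) (x k))) :
    ∃ xb : XSp N, Filter.Tendsto x Filter.atTop (nhds xb) ∧
      (∀ i j, xb i = xb j) ∧ (∀ i, xb i ∈ C₀) := by
  have hfix : ∀ q : XSp N, (∀ i, q i ∈ C₀) → ∀ k, M k q = q := fun q hq k =>
    Set.mem_iInter₂.1 (hℳfix ▸ hq : q ∈ ⋂ U ∈ ℳ, Function.fixedPoints U) _ (hM k)
  have hfamily : ∀ q : XSp N, (∀ i j, q i = q j) → (∀ i, q i ∈ C₀) →
      FiniteParacontractiveFamily (fun k => M k ∘ avgMap (W k)) q := fun q hq hqC =>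
    finiteParacontractiveFamily_comp_avgMap (hℳfin.subset (Set.range_subset_iff.2 hM))
      (h𝒲fin.subset (Set.range_subset_iff.2 hW)) (fun k => hℳpara _ (hM k))
      (fun k => h𝒲 _ (hW k)) hq (hfix q hqC)
  obtain ⟨c, hc⟩ := hC₀ne
  set y : XSp N := WithLp.toLp 2 fun _ => c
  have hT := hfamily y (fun _ _ => rfl) fun _ => hc
  obtain ⟨z, -, φ, hφ, hφz⟩ := tendsto_subseq_of_bounded (Metric.isBounded_closedBall (x := y))
    fun k => (hT.antitone_dist hiter) (Nat.zero_le k)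
  have hℱ : map φ atTop ≤ atTop := hφ.tendsto_atTop
  obtain ⟨k, hk⟩ := (hT.eventually_forall_le_apply_eq_self hiter hℱ hφz Q).exists
  have hkz : ∀ l ≤ Q, M (k + l) z = z ∧ ∀ i j, 0 < W (k + l) i j → z j = z i := fun l hl =>
    (hℳpara _ (hM _)).eq_of_norm_sub_le_comp_avgMap (hfix y (fun _ => hc) _) (h𝒲 _ (hW _)).1
      (h𝒲 _ (hW _)).2 (fun _ _ => rfl) (congrArg (‖· - y‖) (hk l hl)).ge
  have hzC : ∀ i, z i ∈ C₀ := by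
    change z ∈ {x : XSp N | ∀ i, x i ∈ C₀}
    rw [← hℳfix]
    refine Set.mem_iInter₂.2 fun U hU => ?_
    rw [← hMQ k] at hU
    obtain ⟨l, hl, rfl⟩ := hU
    exact (hkz l hl).1
  have hzcons : ∀ i j, z i = z j :=
    (hWconn k).eq_of_forall_mem fun a b ⟨l, _, hl, hpos⟩ => (hkz l hl).2 a b hpos
  exact ⟨z, tendsto_of_antitone_dist_of_tendsto ((hfamily z hzcons hzC).antitone_dist hiter) hℱ
    hφz, hzcons, hzC⟩

/-- Theorem 2 (Convergence of the distributed bargaining protocol). -/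
theorem bargaining_convergence
    (N Q : ℕ) (hN : 1 ≤ N) (hQ : 1 ≤ Q)
    (𝒱 : Set (Finset (Fin N) → ℝ)) (h𝒱fin : 𝒱.Finite) (h𝒱ne : 𝒱.Nonempty)
    (C₀ : Set (EuclideanSpace ℝ (Fin N))) (hC₀ : C₀ = ⋂ v ∈ 𝒱, core v)
    (hC₀ne : C₀.Nonempty)
    (ℳ : Set (XSp N → XSp N)) (hℳfin : ℳ.Finite)
    (hℳpara : ∀ M ∈ ℳ, Paracontraction M)
    (hℳfix : (⋂ M ∈ ℳ, Function.fixedPoints M) = {x : XSp N | ∀ i, x i ∈ C₀})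
    (𝒲 : Set (Matrix (Fin N) (Fin N) ℝ)) (h𝒲fin : 𝒲.Finite)
    (h𝒲 : ∀ W ∈ 𝒲, DoublyStochastic W ∧ ∀ i, 0 < W i i)
    (M : ℕ → (XSp N → XSp N)) (hM : ∀ k, M k ∈ ℳ)
    (hMQ : ∀ n : ℕ, {U | ∃ l ≤ Q, M (n + l) = U} = ℳ)
    (W : ℕ → Matrix (Fin N) (Fin N) ℝ) (hW : ∀ k, W k ∈ 𝒲)
    (hWconn : ∀ k : ℕ, StronglyConnected
      {p : Fin N × Fin N | ∃ l, 1 ≤ l ∧ l ≤ Q ∧ 0 < W (k + l) p.1 p.2})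
    (x : ℕ → XSp N) (x0 : XSp N) (hx0 : x 0 = x0)
    (hiter : ∀ k, x (k + 1) = M k (avgMap (W k) (x k))) :
    ∃ xb : XSp N, Filter.Tendsto x Filter.atTop (nhds xb) ∧
      (∀ i j, xb i = xb j) ∧ (∀ i, xb i ∈ C₀) :=
  bargaining_convergence_general N Q C₀ hC₀ne ℳ hℳfin hℳpara hℳfix 𝒲 h𝒲fin h𝒲 M hM hMQ W hW hWconn x
    hiter
end
end

section
/- Let N ≥ 1 and q ≥ 1 be integers. Let T₁, …, T_q : X → X be nonexpansive maps with respect to ‖·‖_{2,2} with ⋂_{r=1}^q fix(T_r) = C, and assume 𝒜 ∩ C ≠ ∅. Let W₁, …, W_q be N×N doubly stochastic matrices with strictly positive diagonal entries such that the edge set {(i,j) | (W_q ⬝ W_{q−1} ⬝ ⋯ ⬝ W₁)_{ij} > 0} of the matrix product is strongly connected on Fin N. Let 𝑾_r denote the averaging map of W_r on X. Then ⋂_{r=1}^q fix(T_r ∘ 𝑾_r) = 𝒜 ∩ C. -/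
open scoped BigOperators

noncomputable section

/-!
Let `y ∈ 𝒜 ∩ C` and let `x` be fixed by every `T_r ∘ 𝑾_r`. Nonexpansiveness of `T_r` gives
`‖x - y‖ ≤ ‖𝑾_r (x - y)‖`. For a doubly stochastic `W` the defect `‖v‖² - ‖𝑾 v‖²` equals the
weighted variance `∑ᵢ ∑ⱼ Wᵢⱼ ‖vⱼ - (𝑾 v)ᵢ‖²`, so equality forces `vⱼ = (𝑾 v)ᵢ` whenever
`Wᵢⱼ > 0`; together with `Wᵢᵢ > 0` and `y` being a consensus point this gives `xᵢ = xⱼ` along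
every edge of every `W_r`. A positive entry of the product of the `W_r` is a path through such
edges, so strong connectivity makes `x` a consensus point. Every `𝑾_r` fixes consensus points,
hence `x ∈ C`.
-/

open Finset Matrix Relation

section PositivePaths

variable {R : Type*} [Semiring R] [LinearOrder R] [IsOrderedRing R]

theorem Matrix.exists_pos_and_pos_of_mul_apply_pos {l m n : Type*} [Fintype m]
    {A : Matrix l m R} {B : Matrix m n R} (hA : ∀ i j, 0 ≤ A i j) (hB : ∀ i j, 0 ≤ B i j)
    {i : l} {j : n} (h : 0 < (A * B) i j) : ∃ k, 0 < A i k ∧ 0 < B k j := by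
  obtain ⟨k, -, hk⟩ := (sum_pos_iff_of_nonneg fun k _ => mul_nonneg (hA i k) (hB k j)).1 h
  exact ⟨k, (hA i k).lt_of_ne (by rintro h; simp [← h] at hk),
    (hB k j).lt_of_ne (by rintro h; simp [← h] at hk)⟩

variable {ι : Type*} [Fintype ι] [DecidableEq ι] {L : List (Matrix ι ι R)}

theorem Matrix.list_prod_apply_nonneg (hL : ∀ M ∈ L, ∀ i j, 0 ≤ M i j) (i j : ι) :
    0 ≤ L.prod i j := by
  induction L generalizing i j with
  | nil =>
    rw [List.prod_nil, one_apply]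
    split_ifs <;> simp
  | cons A L ih =>
    rw [List.prod_cons, mul_apply]
    exact sum_nonneg fun k _ => mul_nonneg (hL A List.mem_cons_self i k)
      (ih (fun M hM => hL M (List.mem_cons_of_mem A hM)) k j)

theorem Matrix.reflTransGen_of_list_prod_apply_pos {r : ι → ι → Prop}
    (hL : ∀ M ∈ L, ∀ i j, 0 ≤ M i j) (hr : ∀ M ∈ L, ∀ i j, 0 < M i j → r i j) {i j : ι}
    (h : 0 < L.prod i j) : ReflTransGen r i j := by
  induction L generalizing i j with
  | nil =>
    obtain rfl : i = j := by by_contra hij; simp [hij] at h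
    rfl
  | cons A L ih =>
    rw [List.prod_cons] at h
    obtain ⟨k, hik, hkj⟩ := exists_pos_and_pos_of_mul_apply_pos (hL A List.mem_cons_self)
      (list_prod_apply_nonneg fun M hM => hL M (List.mem_cons_of_mem A hM)) h
    exact .head (hr A List.mem_cons_self i k hik)
      (ih (fun M hM => hL M (List.mem_cons_of_mem A hM))
        (fun M hM => hr M (List.mem_cons_of_mem A hM)) hkj)

end PositivePaths

section Variance

variable {ι E : Type*} [Fintype ι] [NormedAddCommGroup E] [InnerProductSpace ℝ E]

theorem sum_mul_norm_sub_weightedSum_sq {w : ι → ℝ} (hw : ∑ j, w j = 1) (v : ι → E) :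
    ∑ j, w j * ‖v j - ∑ k, w k • v k‖ ^ 2 = ∑ j, w j * ‖v j‖ ^ 2 - ‖∑ k, w k • v k‖ ^ 2 := by
  set c := ∑ k, w k • v k
  have hc : ∑ j, w j * inner ℝ (v j) c = ‖c‖ ^ 2 := by
    simp only [← real_inner_self_eq_norm_sq, c, sum_inner, real_inner_smul_left]
  simp only [norm_sub_sq_real, mul_add, mul_sub, sum_add_distrib, sum_sub_distrib]
  rw [← sum_mul, hw]
  simp only [mul_left_comm _ (2 : ℝ), ← mul_sum, hc]
  ring

variable [DecidableEq ι] {W : Matrix ι ι ℝ}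

theorem sum_sum_mul_norm_sub_weightedSum_sq (hW : W ∈ doublyStochastic ℝ ι) (v : ι → E) :
    ∑ i, ∑ j, W i j * ‖v j - ∑ k, W i k • v k‖ ^ 2
      = ∑ j, ‖v j‖ ^ 2 - ∑ i, ‖∑ k, W i k • v k‖ ^ 2 := by
  simp only [sum_mul_norm_sub_weightedSum_sq (sum_row_of_mem_doublyStochastic hW _),
    sum_sub_distrib]
  rw [sum_comm]
  simp only [← sum_mul, sum_col_of_mem_doublyStochastic hW, one_mul]

theorem eq_weightedSum_of_sum_norm_sq_le (hW : W ∈ doublyStochastic ℝ ι) {v : ι → E}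
    (hv : ∑ j, ‖v j‖ ^ 2 ≤ ∑ i, ‖∑ k, W i k • v k‖ ^ 2) {i j : ι} (hij : 0 < W i j) :
    v j = ∑ k, W i k • v k := by
  have hterm : ∀ i j, 0 ≤ W i j * ‖v j - ∑ k, W i k • v k‖ ^ 2 := fun i j =>
    mul_nonneg (nonneg_of_mem_doublyStochastic hW) (sq_nonneg _)
  have hzero : ∑ i, ∑ j, W i j * ‖v j - ∑ k, W i k • v k‖ ^ 2 = 0 :=
    le_antisymm (by linarith [sum_sum_mul_norm_sub_weightedSum_sq hW v])
      (sum_nonneg fun i _ => sum_nonneg fun j _ => hterm i j)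
  rw [Fintype.sum_eq_zero_iff_of_nonneg fun i => sum_nonneg fun j _ => hterm i j] at hzero
  have hij_term := congrFun ((Fintype.sum_eq_zero_iff_of_nonneg (hterm i)).1 (congrFun hzero i)) j
  simpa [hij.ne', sub_eq_zero] using hij_term

theorem eq_of_pos_of_sum_norm_sq_le (hW : W ∈ doublyStochastic ℝ ι) (hdiag : ∀ i, 0 < W i i)
    {v : ι → E} (hv : ∑ j, ‖v j‖ ^ 2 ≤ ∑ i, ‖∑ k, W i k • v k‖ ^ 2) {i j : ι}
    (hij : 0 < W i j) : v i = v j :=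
  (eq_weightedSum_of_sum_norm_sq_le hW hv (hdiag i)).trans
    (eq_weightedSum_of_sum_norm_sq_le hW hv hij).symm

end Variance

section Averaging

variable {N n : ℕ} {W : Matrix (Fin N) (Fin N) ℝ}

theorem doublyStochastic_iff_mem_doublyStochastic :
    DoublyStochastic W ↔ W ∈ doublyStochastic ℝ (Fin N) :=
  mem_doublyStochastic_iff_sum.symm

theorem avgMap_sub (x y : PiLp 2 fun _ : Fin N => EuclideanSpace ℝ (Fin n)) :
    avgMap W (x - y) = avgMap W x - avgMap W y := by
  ext i : 1
  simp [avgMap, smul_sub]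

theorem norm_avgMap_sq (x : PiLp 2 fun _ : Fin N => EuclideanSpace ℝ (Fin n)) :
    ‖avgMap W x‖ ^ 2 = ∑ i, ‖∑ j, W i j • x j‖ ^ 2 :=
  PiLp.norm_sq_eq_of_L2 _ _

theorem avgMap_eq_self_of_consensus (hrow : ∀ i, ∑ j, W i j = 1)
    {x : PiLp 2 fun _ : Fin N => EuclideanSpace ℝ (Fin n)} (hx : ∀ i j, x i = x j) :
    avgMap W x = x := by
  ext i : 1
  simp only [avgMap, hx _ i, ← sum_smul, hrow, one_smul]

theorem eq_of_pos_of_isFixedPt_comp_avgMap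
    {T : (PiLp 2 fun _ : Fin N => EuclideanSpace ℝ (Fin n)) →
      PiLp 2 fun _ : Fin N => EuclideanSpace ℝ (Fin n)}
    (hT : Nonexpansive T) (hW : W ∈ doublyStochastic ℝ (Fin N)) (hdiag : ∀ i, 0 < W i i)
    {x y : PiLp 2 fun _ : Fin N => EuclideanSpace ℝ (Fin n)} (hx : T (avgMap W x) = x)
    (hy : T y = y) (hy_cons : ∀ i j, y i = y j) {i j : Fin N} (hij : 0 < W i j) :
    x i = x j := by
  have hWy : avgMap W y = y :=
    avgMap_eq_self_of_consensus (sum_row_of_mem_doublyStochastic hW) hy_cons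
  have hle : ‖x - y‖ ≤ ‖avgMap W (x - y)‖ :=
    calc ‖x - y‖ = ‖T (avgMap W x) - T (avgMap W y)‖ := by rw [hx, hWy, hy]
      _ ≤ ‖avgMap W x - avgMap W y‖ := hT _ _
      _ = ‖avgMap W (x - y)‖ := by rw [avgMap_sub]
  have hsq : ∑ j, ‖(x - y) j‖ ^ 2 ≤ ∑ i, ‖∑ k, W i k • (x - y) k‖ ^ 2 := by
    rw [← PiLp.norm_sq_eq_of_L2, ← norm_avgMap_sq]
    gcongr
  simpa [hy_cons i j] using eq_of_pos_of_sum_norm_sq_le hW hdiag hsq hij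

end Averaging

theorem consensus_of_stronglyConnected_list_prod {α : Type*} {N : ℕ} {x : Fin N → α}
    {L : List (Matrix (Fin N) (Fin N) ℝ)} (hL : ∀ M ∈ L, ∀ i j, 0 ≤ M i j)
    (hx : ∀ M ∈ L, ∀ i j, 0 < M i j → x i = x j)
    (hconn : StronglyConnected {p : Fin N × Fin N | 0 < L.prod p.1 p.2}) (i j : Fin N) :
    x i = x j := by
  have hequiv : Equivalence fun a b => x a = x b := ⟨fun _ => rfl, Eq.symm, Eq.trans⟩
  refine reflTransGen_le_of_equivalence_of_le hequiv (fun a b hab => ?_) i j (hconn i j)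
  exact reflTransGen_le_of_equivalence_of_le hequiv (fun _ _ => id) a b
    (reflTransGen_of_list_prod_apply_pos hL hx hab)

theorem fixedPoints_T_comp_avg_general
    (N q : ℕ)
    (T : Fin q → (XSp N → XSp N)) (hT : ∀ r, Nonexpansive (T r))
    (C : Set (XSp N)) (hC : (⋂ r, Function.fixedPoints (T r)) = C)
    (𝒜 : Set (XSp N)) (h𝒜 : 𝒜 = {x : XSp N | ∀ i j, x i = x j})
    (hne : (𝒜 ∩ C).Nonempty)
    (W : Fin q → Matrix (Fin N) (Fin N) ℝ)
    (hW : ∀ r, DoublyStochastic (W r) ∧ ∀ i, 0 < W r i i)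
    (hconn : StronglyConnected {p : Fin N × Fin N |
      0 < ((List.ofFn fun r : Fin q => W (Fin.rev r)).prod) p.1 p.2}) :
    (⋂ r, Function.fixedPoints (T r ∘ avgMap (W r))) = 𝒜 ∩ C := by
  subst hC h𝒜
  have hWmem r : W r ∈ doublyStochastic ℝ (Fin N) :=
    doublyStochastic_iff_mem_doublyStochastic.1 (hW r).1
  have havg_cons {x : XSp N} (hx : ∀ i j, x i = x j) r : avgMap (W r) x = x :=
    avgMap_eq_self_of_consensus (sum_row_of_mem_doublyStochastic (hWmem r)) hx
  ext x
  simp only [Set.mem_iInter, Set.mem_inter_iff, Set.mem_ofPred_eq, Function.mem_fixedPoints,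
    Function.IsFixedPt, Function.comp_apply]
  constructor
  · intro hx
    obtain ⟨y, hy_cons, hy⟩ := hne
    simp only [Set.mem_iInter, Function.mem_fixedPoints] at hy
    have hcons : ∀ i j, x i = x j := by
      refine consensus_of_stronglyConnected_list_prod ?_ ?_ hconn
      all_goals
        simp only [List.mem_ofFn', Set.mem_range, forall_exists_index, forall_apply_eq_imp_iff]
      · exact fun r i j => nonneg_of_mem_doublyStochastic (hWmem _)
      · exact fun r i j => eq_of_pos_of_isFixedPt_comp_avgMap (hT _) (hWmem _) (hW _).2 (hx _)
          (hy _) hy_cons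
    exact ⟨hcons, fun r => by simpa [havg_cons hcons r] using hx r⟩
  · rintro ⟨hcons, hx⟩ r
    rw [havg_cons hcons r, hx r]

/-- Lemma 5: fixed points of the composed maps `T_r ∘ 𝑾_r` intersect exactly in
the consensus set intersected with the common fixed-point set `C`. -/
theorem fixedPoints_T_comp_avg
    (N q : ℕ) (hN : 1 ≤ N) (hq : 1 ≤ q)
    (T : Fin q → (XSp N → XSp N)) (hT : ∀ r, Nonexpansive (T r))
    (C : Set (XSp N)) (hC : (⋂ r, Function.fixedPoints (T r)) = C)
    (𝒜 : Set (XSp N)) (h𝒜 : 𝒜 = {x : XSp N | ∀ i j, x i = x j})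
    (hne : (𝒜 ∩ C).Nonempty)
    (W : Fin q → Matrix (Fin N) (Fin N) ℝ)
    (hW : ∀ r, DoublyStochastic (W r) ∧ ∀ i, 0 < W r i i)
    (hconn : StronglyConnected {p : Fin N × Fin N |
      0 < ((List.ofFn fun r : Fin q => W (Fin.rev r)).prod) p.1 p.2}) :
    (⋂ r, Function.fixedPoints (T r ∘ avgMap (W r))) = 𝒜 ∩ C :=
  fixedPoints_T_comp_avg_general N q T hT C hC 𝒜 h𝒜 hne W hW hconn
end
end
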